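/- Let P > 0, N > 0 be reals, let α satisfy P/(P+N) < α < 1, let κ satisfy 0 < κ and α·κ ≤ P, let (h,k) ∈ S(α,κ), and let t satisfy 0 ≤ t < α·N/(α·N + (1−α)·P). Assume additionally that t·((1−α)·κ/N) + (1−t)·(1 − α·κ/P) ≤ t·h + (1−t)·(1−k), i.e., the normalized cost of (h,k) is at least the normalized cost of v_{ακ} = ((1−α)·κ/N, α·κ/P). Then the two-dimensional Lebesgue measure of the set {(x,y) ∈ S(α,κ) : t·x + (1−t)·(1−y) > t·h + (1−t)·(1−k)} equals (1−α)·P·((1−t)·k − t·h)² / (2·(1−t)·(α·N − (α·N + (1−α)·P)·t)). (In this case the set of lesser feasible classifiers of (h,k) is the triangle with vertices (0,0), the intersection of ℓ_t with the minimum precision line, and the intersection of ℓ_t with the y-axis.) -/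

import Mathlib

/-!
Let `m = αN/((1-α)P)` be the slope of the minimum precision line and `s = t/(1-t)` that of the
iso-performance line `ℓ_t`, whose intercept is `c = k - s h`. A feasible point has strictly larger
cost than `(h, k)` exactly when it lies strictly below `ℓ_t`, so the lesser classifiers are the
feasible points of the triangle `0 ≤ x, m x ≤ y < s x + c`; the bound on `t` says `s < m`. The
vertex `v_ακ` of the feasible region lies on the precision line and, by the cost assumption, on or
beyond `ℓ_t`, so the triangle is dominated coordinatewise by it and is entirely feasible. Its area
is `c² / (2 (m - s))` by Fubini.
-/

open MeasureTheory Set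

theorem volume_region_between_co_eq_lintegral {α : Type*} [MeasurableSpace α] {μ : Measure α}
    [SFinite μ] {f g : α → ℝ} {s : Set α} (hf : Measurable f) (hg : Measurable g)
    (hs : MeasurableSet s) :
    μ.prod volume {p : α × ℝ | p.1 ∈ s ∧ p.2 ∈ Ico (f p.1) (g p.1)} =
      ∫⁻ x in s, ENNReal.ofReal (g x - f x) ∂μ := by
  rw [Measure.prod_apply (measurableSet_region_between_co hf hg hs), ← lintegral_indicator hs]
  refine lintegral_congr fun x => ?_
  by_cases hx : x ∈ s
  · rw [indicator_of_mem hx, ← Real.volume_Ico]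
    congr 1 with y
    simp [hx]
  · simp [hx]

def triangle (m s c : ℝ) : Set (ℝ × ℝ) := {p | 0 ≤ p.1 ∧ m * p.1 ≤ p.2 ∧ p.2 < s * p.1 + c}

theorem volume_triangle {m s c : ℝ} (hsm : s < m) (hc : 0 ≤ c) :
    volume (triangle m s c) = ENNReal.ofReal (c ^ 2 / (2 * (m - s))) := by
  have hms : 0 < m - s := sub_pos.2 hsm
  have hb : 0 ≤ c / (m - s) := div_nonneg hc hms.le
  have htri : triangle m s c =
      {p : ℝ × ℝ | p.1 ∈ Icc 0 (c / (m - s)) ∧ p.2 ∈ Ico (m * p.1) (s * p.1 + c)} := by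
    ext ⟨x, y⟩
    simp only [triangle, mem_ofPred_eq, mem_Icc, mem_Ico, le_div_iff₀ hms]
    constructor
    · rintro ⟨hx, hxy, hyx⟩
      exact ⟨⟨hx, by linarith⟩, hxy, hyx⟩
    · rintro ⟨⟨hx, -⟩, hxy, hyx⟩
      exact ⟨hx, hxy, hyx⟩
  rw [htri, Measure.volume_eq_prod, volume_region_between_co_eq_lintegral (f := fun x => m * x)
    (g := fun x => s * x + c) (by fun_prop) (by fun_prop) measurableSet_Icc,
    ← ofReal_integral_eq_lintegral_ofReal]
  · rw [integral_Icc_eq_integral_Ioc, ← intervalIntegral.integral_of_le hb]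
    congr 1
    simp_rw [add_sub_right_comm, ← sub_mul]
    rw [intervalIntegral.integral_add ((continuous_const_mul _).intervalIntegrable _ _)
      intervalIntegrable_const,
      intervalIntegral.integral_const_mul,
      integral_id, intervalIntegral.integral_const, smul_eq_mul]
    field_simp
    ring
  · exact Continuous.integrableOn_Icc (by fun_prop)
  · filter_upwards [self_mem_ae_restrict measurableSet_Icc] with x hx
    rw [mem_Icc, le_div_iff₀ hms] at hx
    show 0 ≤ s * x + c - m * x
    linarith [hx.2]

theorem triangle_lt_apex {m s c X : ℝ} {p : ℝ × ℝ} (hs : 0 ≤ s) (hsm : s < m)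
    (hX : c ≤ (m - s) * X) (hp : p ∈ triangle m s c) : p.1 < X ∧ p.2 < m * X := by
  obtain ⟨hx, hxy, hyx⟩ := hp
  have hxX : p.1 < X := by nlinarith
  exact ⟨hxX, by nlinarith⟩

theorem lt_one_and_div_one_sub_lt_div {a b t : ℝ} (ha : 0 < a) (hb : 0 < b)
    (ht : t < a / (a + b)) : t < 1 ∧ t / (1 - t) < a / b := by
  rw [lt_div_iff₀ (add_pos ha hb)] at ht
  have ht1 : t < 1 := by nlinarith
  refine ⟨ht1, ?_⟩
  rw [div_lt_div_iff₀ (sub_pos.2 ht1) hb]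
  linarith

theorem ge_iff_div_mul_le {a b x y : ℝ} (ha : 0 < a) : a * y ≥ b * x ↔ b / a * x ≤ y := by
  rw [ge_iff_le, div_mul_eq_mul_div, div_le_iff₀ ha, mul_comm y]

theorem sq_div_two_mul_sub_div {a b t k h : ℝ} (ha : a ≠ 0) (ht : t ≠ 1) :
    (k - t / (1 - t) * h) ^ 2 / (2 * (b / a - t / (1 - t))) =
      a * ((1 - t) * k - t * h) ^ 2 / (2 * (1 - t) * (b - (b + a) * t)) := by
  have h1t : 1 - t ≠ 0 := sub_ne_zero.2 ht.symm
  have hD : b / a - t / (1 - t) = (b - (b + a) * t) / (a * (1 - t)) := by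
    field_simp
    ring
  have hc : k - t / (1 - t) * h = ((1 - t) * k - t * h) / (1 - t) := by
    field_simp
  rw [hD, hc]
  field_simp

def feasibleRegion (P N α κ : ℝ) : Set (ℝ × ℝ) :=
  {v | v.1 ∈ Icc (0:ℝ) 1 ∧ v.2 ∈ Icc (0:ℝ) 1 ∧
    (1 - α) * P * v.2 ≥ α * N * v.1 ∧ P * v.2 + N * v.1 ≤ κ}

def normalizedCost (t : ℝ) (v : ℝ × ℝ) : ℝ := t * v.1 + (1 - t) * (1 - v.2)

theorem normalizedCost_lt_iff {t : ℝ} (ht : t < 1) (p v : ℝ × ℝ) :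
    normalizedCost t p < normalizedCost t v ↔
      v.2 < t / (1 - t) * v.1 + (p.2 - t / (1 - t) * p.1) := by
  have h1t : 0 < 1 - t := sub_pos.2 ht
  have hdiff : normalizedCost t v - normalizedCost t p =
      (1 - t) * (t / (1 - t) * v.1 + (p.2 - t / (1 - t) * p.1) - v.2) := by
    unfold normalizedCost
    field_simp
    ring
  rw [← sub_pos, hdiff, mul_pos_iff_of_pos_left h1t, sub_pos]

section Feasible

variable {P N α κ : ℝ}

theorem setOf_lesser_eq_inter_triangle (hPα : 0 < (1 - α) * P) {t : ℝ} (ht : t < 1)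
    (h k : ℝ) :
    {v | v ∈ feasibleRegion P N α κ ∧ normalizedCost t (h, k) < normalizedCost t v} =
      feasibleRegion P N α κ ∩
        triangle (α * N / ((1 - α) * P)) (t / (1 - t)) (k - t / (1 - t) * h) := by
  ext v
  simp only [mem_ofPred_eq, mem_inter_iff, normalizedCost_lt_iff ht]
  constructor
  · rintro ⟨hv, hcost⟩
    exact ⟨hv, hv.1.1, (ge_iff_div_mul_le hPα).1 hv.2.2.1, hcost⟩
  · rintro ⟨hv, -, -, hcost⟩
    exact ⟨hv, hcost⟩

theorem triangle_subset_feasibleRegion (hPα : 0 < (1 - α) * P) (hP : 0 < P) (hN : 0 < N)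
    {s c X : ℝ} (hs : 0 ≤ s) (hsm : s < α * N / ((1 - α) * P))
    (hX : c ≤ (α * N / ((1 - α) * P) - s) * X)
    (hv : (X, α * N / ((1 - α) * P) * X) ∈ feasibleRegion P N α κ) :
    triangle (α * N / ((1 - α) * P)) s c ⊆ feasibleRegion P N α κ := by
  intro p hp
  obtain ⟨⟨-, hX1⟩, ⟨-, hY1⟩, -, hcap⟩ := hv
  obtain ⟨hx, hy⟩ := triangle_lt_apex hs hsm hX hp
  obtain ⟨hx0, hxy, -⟩ := hp
  have hm : 0 ≤ α * N / ((1 - α) * P) := hs.trans hsm.le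
  refine ⟨⟨hx0, by linarith⟩, ⟨by nlinarith, by linarith⟩, (ge_iff_div_mul_le hPα).2 hxy, ?_⟩
  nlinarith

theorem vertex_mem_feasibleRegion (hP : 0 < P) (hN : 0 < N) (hαlo : P / (P + N) < α)
    (hα1 : α < 1) (hκ0 : 0 < κ) (hκ : α * κ ≤ P) :
    ((1 - α) * κ / N, α * κ / P) ∈ feasibleRegion P N α κ := by
  have hα0 : 0 < α := (div_pos hP (add_pos hP hN)).trans hαlo
  rw [div_lt_iff₀ (add_pos hP hN)] at hαlo
  refine ⟨⟨by positivity, ?_⟩, ⟨by positivity, (div_le_one hP).2 hκ⟩, ?_, ?_⟩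
  · rw [div_le_one hN]
    nlinarith
  · exact le_of_eq (by field_simp)
  · exact le_of_eq (by field_simp; ring)

end Feasible

/-- Partial area of lesser classifiers, triangle case. -/
theorem partial_area_triangle_case
    (P N α κ : ℝ) (hP : 0 < P) (hN : 0 < N)
    (hαlo : P / (P + N) < α) (hα1 : α < 1) (hκ0 : 0 < κ) (hκ : α * κ ≤ P)
    (h k : ℝ)
    (hfeas : ((h, k) : ℝ × ℝ) ∈
      {v : ℝ × ℝ | v.1 ∈ Set.Icc (0:ℝ) 1 ∧ v.2 ∈ Set.Icc (0:ℝ) 1 ∧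
        (1 - α) * P * v.2 ≥ α * N * v.1 ∧ P * v.2 + N * v.1 ≤ κ})
    (t : ℝ) (ht0 : 0 ≤ t) (ht1 : t < α * N / (α * N + (1 - α) * P))
    (hcost : t * ((1 - α) * κ / N) + (1 - t) * (1 - α * κ / P) ≤
      t * h + (1 - t) * (1 - k)) :
    volume {v : ℝ × ℝ | (v.1 ∈ Set.Icc (0:ℝ) 1 ∧ v.2 ∈ Set.Icc (0:ℝ) 1 ∧
        (1 - α) * P * v.2 ≥ α * N * v.1 ∧ P * v.2 + N * v.1 ≤ κ) ∧
        t * v.1 + (1 - t) * (1 - v.2) > t * h + (1 - t) * (1 - k)} =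
      ENNReal.ofReal ((1 - α) * P * ((1 - t) * k - t * h) ^ 2 /
        (2 * (1 - t) * (α * N - (α * N + (1 - α) * P) * t))) := by
  obtain ⟨⟨hh0, -⟩, -, hprec, -⟩ := hfeas
  have hα0 : 0 < α := (div_pos hP (add_pos hP hN)).trans hαlo
  have hPα : 0 < (1 - α) * P := mul_pos (sub_pos.2 hα1) hP
  obtain ⟨ht1', hsm⟩ := lt_one_and_div_one_sub_lt_div (mul_pos hα0 hN) hPα ht1
  have hs0 : 0 ≤ t / (1 - t) := div_nonneg ht0 (sub_nonneg.2 ht1'.le)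
  have hc0 : 0 ≤ k - t / (1 - t) * h :=
    sub_nonneg.2 ((mul_le_mul_of_nonneg_right hsm.le hh0).trans ((ge_iff_div_mul_le hPα).1 hprec))
  have hvert : α * N / ((1 - α) * P) * ((1 - α) * κ / N) = α * κ / P := by
    field_simp [(sub_pos.2 hα1).ne']
  have hcX : k - t / (1 - t) * h ≤ (α * N / ((1 - α) * P) - t / (1 - t)) * ((1 - α) * κ / N) := by
    have hvert_above := (normalizedCost_lt_iff ht1' (h, k) ((1 - α) * κ / N, α * κ / P)).not.1
      (not_lt.2 hcost)
    linarith
  have hsub := triangle_subset_feasibleRegion hPα hP hN hs0 hsm hcX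
    (hvert ▸ vertex_mem_feasibleRegion hP hN hαlo hα1 hκ0 hκ)
  change volume {v | v ∈ feasibleRegion P N α κ ∧ normalizedCost t (h, k) < normalizedCost t v} = _
  rw [setOf_lesser_eq_inter_triangle hPα ht1', inter_eq_right.2 hsub, volume_triangle hsm hc0,
    sq_div_two_mul_sub_div hPα.ne' ht1'.ne]
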